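/- Let w_1 ≥ w_2 ≥ w_3 ≥ w_4 be real numbers with w_1 > w_4, and define s = (2w_2 - w_1 - w_4)/(w_1 - w_4) and t = (2w_3 - w_1 - w_4)/(w_1 - w_4). Then the polynomial p(x) = (x - w_1)(x - w_2)(x - w_3)(x - w_4) has a hyperbolic antiderivative if and only if s·t ≥ -1/5. -/

import Mathlib

open Polynomial

/-- A real polynomial is hyperbolic if all of its complex roots are real. -/
def Hyperbolic (p : Polynomial ℝ) : Prop :=
  ∀ z ∈ (p.map (algebraMap ℝ ℂ)).roots, z.im = 0

/-!
Every antiderivative `P` of `p` satisfies `P(w₁) - P(w₄) = -(w₁ - w₄)⁵ (1 + 5st) / 120`.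

If `P` is hyperbolic, `P'/P = ∑ 1/(x - r)` over its roots shows that every critical point lies
between its smallest and its largest root. As `P` increases on `(-∞, w₄]` and on `[w₁, ∞)`, this
forces `P(w₁) ≤ 0 ≤ P(w₄)`, i.e. `st ≥ -1/5`.

Conversely, if `P(w₁) ≤ P(w₄)`, shifting by a constant makes `P(w₄), P(w₂) ≥ 0 ≥ P(w₃), P(w₁)`.
Along `a ≤ w₄ ≤ w₃ ≤ w₂ ≤ w₁ ≤ b` with `P(a) ≤ 0 < P(b)`, each point where `P` does not vanish
yields a new distinct root to its left by the intermediate value theorem, while each `wᵢ` where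
`P` vanishes adds one to the multiplicity of a root. Hence `P` has `5 = deg P` real roots.
-/

open Set

namespace Polynomial

theorem hyperbolic_iff_splits (P : ℝ[X]) : Hyperbolic P ↔ P.Splits := by
  refine ⟨fun h => Splits.of_splits_map (algebraMap ℝ ℂ) (IsAlgClosed.splits _)
    fun z hz => ⟨z.re, Complex.ext rfl (h z hz).symm⟩, fun h z hz => ?_⟩
  rw [h.roots_map] at hz
  obtain ⟨r, -, rfl⟩ := Multiset.mem_map.1 hz
  exact Complex.ofReal_im r

-- A root of `p` of multiplicity `m` is a root of `p'` of multiplicity `m - 1`.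
theorem card_roots_eq_card_toFinset_add_countP {R : Type*} [CommRing R] [IsDomain R] [CharZero R]
    [DecidableEq R] (p : R[X]) :
    Multiset.card p.roots = p.roots.toFinset.card + p.derivative.roots.countP p.IsRoot := by
  rcases eq_or_ne p 0 with rfl | hp
  · simp
  have hsplit : p.roots = p.roots.dedup + p.derivative.roots.filter p.IsRoot := by
    ext a
    simp only [Multiset.count_add, Multiset.count_dedup, Multiset.count_filter, count_roots,
      mem_roots hp]
    split_ifs with ha
    · have := (rootMultiplicity_pos hp).2 ha
      rw [derivative_rootMultiplicity_of_root ha]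
      omega
    · simp [rootMultiplicity_eq_zero ha]
  conv_lhs => rw [hsplit]
  rw [Multiset.card_add, Multiset.card_toFinset, Multiset.countP_eq_card_filter]

section Ordered

variable {R : Type*} [Field R] [LinearOrder R] [IsStrictOrderedRing R] {P : R[X]} {x : R}

theorem Splits.sum_one_div_sub_eq_zero (hP : P.Splits) (hx : P.derivative.IsRoot x)
    (hPx : ¬P.IsRoot x) : (P.roots.map fun z => 1 / (x - z)).sum = 0 :=
  (mul_eq_zero.1 ((hP.eval_derivative_eq_eval_mul_sum hPx).symm.trans hx)).resolve_left hPx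

theorem Splits.exists_mem_roots_ge_of_isRoot_derivative (hP : P.Splits) (hdeg : P.natDegree ≠ 0)
    (hx : P.derivative.IsRoot x) : ∃ r ∈ P.roots, x ≤ r := by
  by_contra! h
  have hPx : ¬P.IsRoot x := fun h0 =>
    lt_irrefl x (h x ((mem_roots (ne_zero_of_natDegree_gt (Nat.pos_of_ne_zero hdeg))).2 h0))
  have hsum : 0 < (P.roots.map fun z => 1 / (x - z)).sum := by
    simpa using Multiset.sum_lt_sum_of_nonempty (f := fun _ => (0 : R))
      (hP.roots_ne_zero hdeg) fun z hz => one_div_pos.2 (sub_pos.2 (h z hz))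
  exact hsum.ne' (hP.sum_one_div_sub_eq_zero hx hPx)

theorem Splits.exists_mem_roots_le_of_isRoot_derivative (hP : P.Splits) (hdeg : P.natDegree ≠ 0)
    (hx : P.derivative.IsRoot x) : ∃ r ∈ P.roots, r ≤ x := by
  by_contra! h
  have hPx : ¬P.IsRoot x := fun h0 =>
    lt_irrefl x (h x ((mem_roots (ne_zero_of_natDegree_gt (Nat.pos_of_ne_zero hdeg))).2 h0))
  have hsum : (P.roots.map fun z => 1 / (x - z)).sum < 0 := by
    simpa using Multiset.sum_lt_sum_of_nonempty (g := fun _ => (0 : R))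
      (hP.roots_ne_zero hdeg) fun z hz => one_div_neg.2 (sub_neg.2 (h z hz))
  exact hsum.ne (hP.sum_one_div_sub_eq_zero hx hPx)

end Ordered

theorem eval_le_eval_of_derivative_nonneg {P : ℝ[X]} {u v : ℝ} (huv : u ≤ v)
    (h : ∀ x ∈ Ioo u v, 0 ≤ P.derivative.eval x) : P.eval u ≤ P.eval v :=
  monotoneOn_of_deriv_nonneg (convex_Icc u v) P.continuousOn P.differentiableOn
    (by simpa [interior_Icc] using h) (left_mem_Icc.2 huv) (right_mem_Icc.2 huv) huv

theorem eval_le_eval_of_derivative_nonpos {P : ℝ[X]} {u v : ℝ} (huv : u ≤ v)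
    (h : ∀ x ∈ Ioo u v, P.derivative.eval x ≤ 0) : P.eval v ≤ P.eval u := by
  simpa using eval_le_eval_of_derivative_nonneg (P := -P) huv (by simpa using h)

theorem exists_le_eval_nonpos_of_odd_natDegree {P : ℝ[X]} (hodd : Odd P.natDegree)
    (hlc : 0 ≤ P.leadingCoeff) (x : ℝ) : ∃ a ≤ x, P.eval a ≤ 0 := by
  by_contra! h
  have := zero_le_negOnePow_mul_eval_of_le_roots_of_leadingCoeff_nonneg (x := x)
    (fun y hy => le_of_not_gt fun hyx => (h y hyx.le).ne' hy) hlc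
  rw [Int.negOnePow_odd _ (by exact_mod_cast hodd)] at this
  push_cast at this
  linarith [h x le_rfl]

theorem exists_ge_eval_pos {P : ℝ[X]} (hdeg : 0 < P.degree) (hlc : 0 ≤ P.leadingCoeff) (x : ℝ) :
    ∃ b ≥ x, 0 < P.eval b :=
  (((P.tendsto_atTop_of_leadingCoeff_nonneg hdeg hlc).eventually_gt_atTop 0).and
    (Filter.eventually_ge_atTop x)).exists.imp fun _ hb => ⟨hb.2, hb.1⟩

theorem exists_isRoot_mem_Ico {P : ℝ[X]} {u v : ℝ} (huv : u ≤ v) (hsign : P.eval u * P.eval v ≤ 0)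
    (hv : ¬P.IsRoot v) : ∃ r ∈ Ico u v, P.IsRoot r := by
  rcases lt_or_gt_of_ne hv with hneg | hpos
  · exact intermediate_value_Ico' huv P.continuousOn ⟨hneg, nonneg_of_mul_nonpos_left hsign hneg⟩
  · exact intermediate_value_Ico huv P.continuousOn ⟨nonpos_of_mul_nonpos_left hsign hpos, hpos⟩

theorem card_filter_lt_add_le {P : ℝ[X]} {u v : ℝ} (huv : u ≤ v)
    (hsign : P.eval u * P.eval v ≤ 0) :
    (P.roots.toFinset.filter (· < u)).card + (if P.IsRoot v then 0 else 1) ≤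
      (P.roots.toFinset.filter (· < v)).card := by
  have hsub : P.roots.toFinset.filter (· < u) ⊆ P.roots.toFinset.filter (· < v) :=
    Finset.monotone_filter_right _ fun _ _ hx => hx.trans_le huv
  split_ifs with hv
  · simpa using Finset.card_le_card hsub
  obtain ⟨r, hr, hroot⟩ := exists_isRoot_mem_Ico huv hsign hv
  have hP0 : P ≠ 0 := by rintro rfl; exact hv eval_zero
  refine Finset.card_lt_card ((Finset.ssubset_iff_of_subset hsub).2 ⟨r, ?_, ?_⟩)
  · exact Finset.mem_filter.2 ⟨Multiset.mem_toFinset.2 ((mem_roots hP0).2 hroot), hr.2⟩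
  · simp [hr.1]

theorem five_le_card_roots_of_alternating {P : ℝ[X]} {a w₁ w₂ w₃ w₄ b : ℝ}
    (hroots : P.derivative.roots = {w₁, w₂, w₃, w₄})
    (ha : a ≤ w₄) (h43 : w₄ ≤ w₃) (h32 : w₃ ≤ w₂) (h21 : w₂ ≤ w₁) (hb : w₁ ≤ b)
    (hPa : P.eval a ≤ 0) (hP4 : 0 ≤ P.eval w₄) (hP3 : P.eval w₃ ≤ 0) (hP2 : 0 ≤ P.eval w₂)
    (hP1 : P.eval w₁ ≤ 0) (hPb : 0 < P.eval b) : 5 ≤ Multiset.card P.roots := by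
  have s4 := card_filter_lt_add_le ha (mul_nonpos_of_nonpos_of_nonneg hPa hP4)
  have s3 := card_filter_lt_add_le h43 (mul_nonpos_of_nonneg_of_nonpos hP4 hP3)
  have s2 := card_filter_lt_add_le h32 (mul_nonpos_of_nonpos_of_nonneg hP3 hP2)
  have s1 := card_filter_lt_add_le h21 (mul_nonpos_of_nonneg_of_nonpos hP2 hP1)
  have sb := card_filter_lt_add_le hb (mul_nonpos_of_nonpos_of_nonneg hP1 hPb.le)
  rw [if_neg (show ¬P.IsRoot b from hPb.ne')] at sb
  have hZ := Finset.card_filter_le P.roots.toFinset (· < b)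
  have hcard := card_roots_eq_card_toFinset_add_countP P
  rw [hroots] at hcard
  simp only [Multiset.insert_eq_cons, ← Multiset.cons_zero, Multiset.countP_cons,
    Multiset.countP_zero] at hcard
  split_ifs at * <;> omega

section Quartic

variable {w₁ w₂ w₃ w₄ : ℝ}

noncomputable def quarticAntideriv (w₁ w₂ w₃ w₄ : ℝ) : ℝ[X] :=
  C (1 / 5) * X ^ 5 - C ((w₁ + w₂ + w₃ + w₄) / 4) * X ^ 4
    + C ((w₁ * w₂ + w₁ * w₃ + w₁ * w₄ + w₂ * w₃ + w₂ * w₄ + w₃ * w₄) / 3) * X ^ 3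
    - C ((w₁ * w₂ * w₃ + w₁ * w₂ * w₄ + w₁ * w₃ * w₄ + w₂ * w₃ * w₄) / 2) * X ^ 2
    + C (w₁ * w₂ * w₃ * w₄) * X

theorem derivative_quarticAntideriv :
    derivative (quarticAntideriv w₁ w₂ w₃ w₄) =
      (X - C w₁) * (X - C w₂) * (X - C w₃) * (X - C w₄) := by
  refine Polynomial.funext fun x => ?_
  simp only [quarticAntideriv, derivative_add, derivative_sub, derivative_C_mul_X_pow,
    derivative_C_mul_X, eval_add, eval_sub, eval_mul, eval_C, eval_X, eval_pow]
  push_cast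
  ring

theorem eval_quartic (x : ℝ) :
    ((X - C w₁) * (X - C w₂) * (X - C w₃) * (X - C w₄)).eval x =
      (x - w₁) * (x - w₂) * (x - w₃) * (x - w₄) := by
  simp

theorem eval_sub_eval_of_derivative_eq_quartic {P : ℝ[X]}
    (hP : derivative P = (X - C w₁) * (X - C w₂) * (X - C w₃) * (X - C w₄)) :
    P.eval w₁ - P.eval w₄ =
      -((w₁ - w₄) ^ 3 * ((w₁ - w₄) ^ 2 + 5 * ((2 * w₂ - w₁ - w₄) * (2 * w₃ - w₁ - w₄)))) / 120 := by
  have hconst := eq_C_of_derivative_eq_zero (p := P - quarticAntideriv w₁ w₂ w₃ w₄)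
    (by rw [derivative_sub, hP, derivative_quarticAntideriv, sub_self])
  have e₁ := congrArg (eval w₁) hconst
  have e₄ := congrArg (eval w₄) hconst
  simp only [quarticAntideriv, eval_sub, eval_add, eval_mul, eval_C, eval_X, eval_pow] at e₁ e₄
  linear_combination e₁ - e₄

theorem natDegree_eq_five_of_derivative_eq_quartic {P : ℝ[X]}
    (hP : derivative P = (X - C w₁) * (X - C w₂) * (X - C w₃) * (X - C w₄)) :
    P.natDegree = 5 ∧ 0 < P.leadingCoeff := by
  have hmonic : ((X - C w₁) * (X - C w₂) * (X - C w₃) * (X - C w₄)).Monic := by monicity!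
  have hdeg : ((X - C w₁) * (X - C w₂) * (X - C w₃) * (X - C w₄)).natDegree = 4 := by
    compute_degree!
  have h5 : P.natDegree = 5 := by
    have := natDegree_derivative P
    rw [hP, hdeg] at this
    have hne : P.natDegree ≠ 0 := by rw [← derivative_ne_zero, hP]; exact hmonic.ne_zero
    omega
  refine ⟨h5, ?_⟩
  have := leadingCoeff_derivative P
  rw [hP, hmonic.leadingCoeff, h5] at this
  push_cast at this
  linarith

theorem _root_.Hyperbolic.eval_nonpos_and_nonneg_of_derivative_eq_quartic {P : ℝ[X]}
    (hyp : Hyperbolic P) (h12 : w₂ ≤ w₁) (h23 : w₃ ≤ w₂) (h34 : w₄ ≤ w₃)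
    (hP : derivative P = (X - C w₁) * (X - C w₂) * (X - C w₃) * (X - C w₄)) :
    P.eval w₁ ≤ 0 ∧ 0 ≤ P.eval w₄ := by
  have hS := (hyperbolic_iff_splits P).1 hyp
  have hdeg : P.natDegree ≠ 0 := by rw [(natDegree_eq_five_of_derivative_eq_quartic hP).1]; omega
  have hP0 : P ≠ 0 := by rintro rfl; simp at hdeg
  obtain ⟨r, hr, h1r⟩ := hS.exists_mem_roots_ge_of_isRoot_derivative (x := w₁) hdeg (by simp [hP])
  obtain ⟨r', hr', hr'4⟩ :=
    hS.exists_mem_roots_le_of_isRoot_derivative (x := w₄) hdeg (by simp [hP])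
  constructor
  · calc P.eval w₁ ≤ P.eval r := eval_le_eval_of_derivative_nonneg h1r fun x hx => by
          rw [hP, eval_quartic]
          exact mul_nonneg (mul_nonneg (mul_nonneg (by linarith [hx.1]) (by linarith [hx.1]))
            (by linarith [hx.1])) (by linarith [hx.1])
      _ = 0 := (mem_roots hP0).1 hr
  · calc 0 = P.eval r' := ((mem_roots hP0).1 hr').symm
      _ ≤ P.eval w₄ := eval_le_eval_of_derivative_nonneg hr'4 fun x hx => by
          rw [hP, eval_quartic]
          exact mul_nonneg_of_nonpos_of_nonpos (mul_nonpos_of_nonneg_of_nonpos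
            (mul_nonneg_of_nonpos_of_nonpos (by linarith [hx.2]) (by linarith [hx.2]))
            (by linarith [hx.2])) (by linarith [hx.2])

theorem hyperbolic_of_derivative_eq_quartic {P : ℝ[X]}
    (h12 : w₂ ≤ w₁) (h23 : w₃ ≤ w₂) (h34 : w₄ ≤ w₃)
    (hP : derivative P = (X - C w₁) * (X - C w₂) * (X - C w₃) * (X - C w₄))
    (hP4 : 0 ≤ P.eval w₄) (hP3 : P.eval w₃ ≤ 0) (hP2 : 0 ≤ P.eval w₂) (hP1 : P.eval w₁ ≤ 0) :
    Hyperbolic P := by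
  obtain ⟨hdeg, hlc⟩ := natDegree_eq_five_of_derivative_eq_quartic hP
  obtain ⟨a, ha, hPa⟩ := exists_le_eval_nonpos_of_odd_natDegree (by rw [hdeg]; decide) hlc.le w₄
  obtain ⟨b, hb, hPb⟩ :=
    exists_ge_eval_pos (natDegree_pos_iff_degree_pos.1 (by omega)) hlc.le w₁
  have hroots : P.derivative.roots = {w₁, w₂, w₃, w₄} := by
    rw [hP, roots_mul, roots_mul, roots_mul] <;> simp [X_sub_C_ne_zero]
  have h5 := five_le_card_roots_of_alternating hroots ha h34 h23 h12 hb hPa hP4 hP3 hP2 hP1 hPb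
  rw [hyperbolic_iff_splits, splits_iff_card_roots]
  exact le_antisymm (card_roots' P) (hdeg ▸ h5)

theorem exists_hyperbolic_antiderivative_iff (h12 : w₂ ≤ w₁) (h23 : w₃ ≤ w₂) (h34 : w₄ ≤ w₃)
    (h14 : w₄ < w₁) :
    (∃ P : ℝ[X], derivative P = (X - C w₁) * (X - C w₂) * (X - C w₃) * (X - C w₄) ∧ Hyperbolic P) ↔
      0 ≤ (w₁ - w₄) ^ 2 + 5 * ((2 * w₂ - w₁ - w₄) * (2 * w₃ - w₁ - w₄)) := by
  constructor
  · rintro ⟨P, hP, hyp⟩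
    obtain ⟨h1, h4⟩ := hyp.eval_nonpos_and_nonneg_of_derivative_eq_quartic h12 h23 h34 hP
    have hdiff := eval_sub_eval_of_derivative_eq_quartic hP
    exact (mul_nonneg_iff_of_pos_left (pow_pos (sub_pos.2 h14) 3)).1 (by linarith)
  · intro hD
    set F := quarticAntideriv w₁ w₂ w₃ w₄
    have hF : derivative F = _ := derivative_quarticAntideriv
    have h43 : F.eval w₃ ≤ F.eval w₄ := eval_le_eval_of_derivative_nonpos h34 fun x hx => by
      rw [hF, eval_quartic]
      exact mul_nonpos_of_nonpos_of_nonneg (mul_nonpos_of_nonneg_of_nonpos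
        (mul_nonneg_of_nonpos_of_nonpos (by linarith [hx.2]) (by linarith [hx.2]))
        (by linarith [hx.2])) (by linarith [hx.1])
    have h32 : F.eval w₃ ≤ F.eval w₂ := eval_le_eval_of_derivative_nonneg h23 fun x hx => by
      rw [hF, eval_quartic]
      exact mul_nonneg (mul_nonneg
        (mul_nonneg_of_nonpos_of_nonpos (by linarith [hx.2]) (by linarith [hx.2]))
        (by linarith [hx.1])) (by linarith [hx.1])
    have h21 : F.eval w₁ ≤ F.eval w₂ := eval_le_eval_of_derivative_nonpos h12 fun x hx => by
      rw [hF, eval_quartic]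
      exact mul_nonpos_of_nonpos_of_nonneg (mul_nonpos_of_nonpos_of_nonneg
        (mul_nonpos_of_nonpos_of_nonneg (by linarith [hx.2]) (by linarith [hx.1]))
        (by linarith [hx.1])) (by linarith [hx.1])
    have h41 : F.eval w₁ ≤ F.eval w₄ := by
      have hdiff := eval_sub_eval_of_derivative_eq_quartic hF
      nlinarith [mul_nonneg (pow_nonneg (sub_nonneg.2 h14.le) 3) hD]
    refine ⟨F - C (min (F.eval w₄) (F.eval w₂)), by rw [derivative_sub, derivative_C, sub_zero, hF],
      hyperbolic_of_derivative_eq_quartic h12 h23 h34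
        (by rw [derivative_sub, derivative_C, sub_zero, hF]) ?_ ?_ ?_ ?_⟩ <;>
      simp only [eval_sub, eval_C]
    · linarith [min_le_left (F.eval w₄) (F.eval w₂)]
    · linarith [le_min h43 h32]
    · linarith [min_le_right (F.eval w₄) (F.eval w₂)]
    · linarith [le_min h41 h21]

end Quartic

end Polynomial

theorem stmt_18 (w₁ w₂ w₃ w₄ : ℝ) (h12 : w₂ ≤ w₁) (h23 : w₃ ≤ w₂) (h34 : w₄ ≤ w₃)
    (h14 : w₄ < w₁)
    (s t : ℝ) (hs : s = (2 * w₂ - w₁ - w₄) / (w₁ - w₄))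
    (ht : t = (2 * w₃ - w₁ - w₄) / (w₁ - w₄))
    (p : Polynomial ℝ)
    (hp : p = (X - C w₁) * (X - C w₂) * (X - C w₃) * (X - C w₄)) :
    (∃ P : Polynomial ℝ, derivative P = p ∧ Hyperbolic P) ↔ s * t ≥ -(1 / 5) := by
  have hst : s * t ≥ -(1 / 5) ↔
      0 ≤ (w₁ - w₄) ^ 2 + 5 * ((2 * w₂ - w₁ - w₄) * (2 * w₃ - w₁ - w₄)) := by
    rw [hs, ht, div_mul_div_comm, ← sq, ge_iff_le, le_div_iff₀ (pow_pos (sub_pos.2 h14) 2)]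
    constructor <;> intro h <;> linarith
  rw [hst, hp]
  exact exists_hyperbolic_antiderivative_iff h12 h23 h34 h14
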